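/- arXiv:2311.05121 — 2 statements merged into one kernel-verified Lean document; each statement's English description precedes it below -/
import Mathlib

section
/- For every λ > 0 with λ ≠ 1, one has (λ−1)/log(λ) = ∫_{0}^{∞} ((s+1)/(s(π²+log(s)²))) · (λ/(λ+s)) ds; moreover the map λ ↦ (λ−1)/log(λ) (extended by value 1 at λ = 1) is a complete Bernstein function. -/
open MeasureTheory Real
open scoped ENNReal NNReal

lemma sineexp (a : ℝ) :
    ∫ u in (0:ℝ)..1, Real.sin (π * u) * Real.exp (a * u)
      = π * (Real.exp a + 1) / (a ^ 2 + π ^ 2) := by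
  have hd : (0:ℝ) < a ^ 2 + π ^ 2 := by positivity
  have key : ∀ u ∈ Set.uIcc (0:ℝ) 1, HasDerivAt
      (fun u : ℝ => Real.exp (a * u) * (a * Real.sin (π * u) - π * Real.cos (π * u))
        / (a ^ 2 + π ^ 2))
      (Real.sin (π * u) * Real.exp (a * u)) u := by
    intro u _
    have h1 : HasDerivAt (fun u : ℝ => Real.exp (a * u)) (a * Real.exp (a * u)) u := by
      simpa [mul_comm] using ((hasDerivAt_id u).const_mul a).exp
    have h2 : HasDerivAt (fun u : ℝ => Real.sin (π * u)) (π * Real.cos (π * u)) u := by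
      simpa [mul_comm] using ((hasDerivAt_id u).const_mul π).sin
    have h3 : HasDerivAt (fun u : ℝ => Real.cos (π * u)) (-(π * Real.sin (π * u))) u := by
      simpa [mul_comm, mul_assoc] using ((hasDerivAt_id u).const_mul π).cos
    have := ((h1.mul ((h2.const_mul a).sub (h3.const_mul π))).div_const (a ^ 2 + π ^ 2))
    refine this.congr_deriv ?_
    simp only [Pi.sub_apply]
    rw [div_eq_iff hd.ne']
    ring
  rw [intervalIntegral.integral_eq_sub_of_hasDerivAt key]
  · simp [Real.sin_pi, Real.cos_pi]
    field_simp
    ring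
  · apply Continuous.intervalIntegrable
    continuity

lemma rpow_integral (x : ℝ) (hx : 0 < x) :
    ∫ u in (0:ℝ)..1, x ^ u = if x = 1 then 1 else (x - 1) / Real.log x := by
  by_cases h1 : x = 1
  · simp [h1]
  · have hc : Real.log x ≠ 0 := by
      intro h
      rcases Real.log_eq_zero.mp h with h | h | h <;> [linarith; exact h1 h; linarith]
    have hfun : (fun u : ℝ => x ^ u) = fun u : ℝ => Real.exp (Real.log x * u) :=
      funext fun u => Real.rpow_def_of_pos hx u
    have key : ∀ u ∈ Set.uIcc (0:ℝ) 1, HasDerivAt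
        (fun u : ℝ => Real.exp (Real.log x * u) / Real.log x) (x ^ u) u := by
      intro u _
      have h2 : HasDerivAt (fun u : ℝ => Real.exp (Real.log x * u))
          (Real.log x * Real.exp (Real.log x * u)) u := by
        simpa [mul_comm] using ((hasDerivAt_id u).const_mul (Real.log x)).exp
      have := h2.div_const (Real.log x)
      rw [mul_div_cancel_left₀ _ hc] at this
      simpa only [Real.rpow_def_of_pos hx] using this
    rw [if_neg h1, intervalIntegral.integral_eq_sub_of_hasDerivAt key]
    · simp [Real.exp_log hx]
      ring
    · apply Continuous.intervalIntegrable
      show Continuous fun u : ℝ => x ^ u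
      rw [hfun]
      continuity

lemma beta_real {u : ℝ} (hu : 0 < u) (hu1 : u < 1) :
    IntegrableOn (fun t : ℝ => t ^ (u - 1) * (1 - t) ^ (-u)) (Set.Ioo 0 1) ∧
    ∫ t in Set.Ioo (0:ℝ) 1, t ^ (u - 1) * (1 - t) ^ (-u) = π / Real.sin (π * u) := by
  have hcc : IntervalIntegrable
      (fun x : ℝ => (x : ℂ) ^ ((u:ℂ) - 1) * (1 - (x : ℂ)) ^ ((1 - (u:ℂ)) - 1)) volume 0 1 :=
    Complex.betaIntegral_convergent (by simpa using hu) (by simp [hu1])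
  have heq : ∀ x ∈ Set.Ioc (0:ℝ) 1,
      ((x ^ (u - 1) * (1 - x) ^ (-u) : ℝ) : ℂ)
        = (x : ℂ) ^ ((u:ℂ) - 1) * (1 - (x : ℂ)) ^ ((1 - (u:ℂ)) - 1) := by
    intro x hx
    have h1 : (1 - (u:ℂ)) - 1 = ((-u : ℝ) : ℂ) := by push_cast; ring
    have h2 : ((u:ℂ) - 1) = (((u - 1 : ℝ)) : ℂ) := by push_cast; ring
    rw [h1, h2, ← Complex.ofReal_cpow hx.1.le, ← Complex.ofReal_one, ← Complex.ofReal_sub,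
      ← Complex.ofReal_cpow (by linarith [hx.2]), ← Complex.ofReal_mul]
  have hIoc : IntegrableOn
      (fun t : ℝ => t ^ (u - 1) * (1 - t) ^ (-u)) (Set.Ioc 0 1) := by
    have := (hcc.1.re)
    refine (integrable_congr ?_).mp this
    filter_upwards [ae_restrict_mem measurableSet_Ioc] with x hx
    rw [← heq x hx]
    exact Complex.ofReal_re _
  constructor
  · exact hIoc.mono_set Set.Ioo_subset_Ioc_self
  · have hbeta : Complex.betaIntegral u (1 - u) = ↑(π / Real.sin (π * u)) := by
      have h := Complex.Gamma_mul_Gamma_eq_betaIntegral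
        (s := (u:ℂ)) (t := 1 - u) (by simpa using hu) (by simp [hu1])
      rw [add_sub_cancel, Complex.Gamma_one, one_mul] at h
      rw [← h, Complex.Gamma_mul_Gamma_one_sub]
      push_cast
      simp
    have key : ((∫ t in Set.Ioo (0:ℝ) 1, t ^ (u - 1) * (1 - t) ^ (-u) : ℝ) : ℂ)
        = Complex.betaIntegral u (1 - u) := by
      rw [← MeasureTheory.integral_Ioc_eq_integral_Ioo]
      calc ((∫ t in Set.Ioc (0:ℝ) 1, t ^ (u - 1) * (1 - t) ^ (-u) : ℝ) : ℂ)
          = ∫ t in Set.Ioc (0:ℝ) 1, ((t ^ (u - 1) * (1 - t) ^ (-u) : ℝ) : ℂ) :=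
            integral_ofReal.symm
        _ = ∫ t in Set.Ioc (0:ℝ) 1, (t : ℂ) ^ ((u:ℂ) - 1) * (1 - (t : ℂ)) ^ ((1 - (u:ℂ)) - 1) :=
            setIntegral_congr_fun measurableSet_Ioc heq
        _ = Complex.betaIntegral u (1 - u) := by
            rw [Complex.betaIntegral, intervalIntegral.integral_of_le zero_le_one]
    rw [hbeta] at key
    exact_mod_cast key

lemma mellin_frac {u x : ℝ} (hu : 0 < u) (hu1 : u < 1) (hx : 0 < x) :
    IntegrableOn (fun s : ℝ => s ^ (u - 1) * (x / (x + s))) (Set.Ioi 0) ∧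
    ∫ s in Set.Ioi (0:ℝ), s ^ (u - 1) * (x / (x + s)) = x ^ u * (π / Real.sin (π * u)) := by
  set f : ℝ → ℝ := fun t => x * t / (1 - t) with hf
  set f' : ℝ → ℝ := fun t => x / (1 - t) ^ 2 with hf'
  have himg : f '' Set.Ioo 0 1 = Set.Ioi (0:ℝ) := by
    ext y
    constructor
    · rintro ⟨t, ⟨ht0, ht1⟩, rfl⟩
      have : 0 < 1 - t := by linarith
      exact div_pos (by positivity) this
    · intro hy
      have hy' : (0:ℝ) < y := hy
      refine ⟨y / (y + x), ⟨by positivity, ?_⟩, ?_⟩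
      · rw [div_lt_one (by positivity)]; linarith
      · show x * (y / (y + x)) / (1 - y / (y + x)) = y
        have h1 : 1 - y / (y + x) = x / (y + x) := by field_simp; ring
        rw [h1]
        field_simp
  have hderiv : ∀ t ∈ Set.Ioo (0:ℝ) 1, HasDerivWithinAt f (f' t) (Set.Ioo 0 1) t := by
    intro t ⟨ht0, ht1⟩
    have h1t : (1:ℝ) - t ≠ 0 := by intro h; linarith [h]
    have hnum : HasDerivAt (fun t : ℝ => x * t) x t := by
      simpa using (hasDerivAt_id t).const_mul x
    have hden : HasDerivAt (fun t : ℝ => 1 - t) (-1) t := by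
      simpa using (hasDerivAt_id t).const_sub 1
    have := hnum.div hden h1t
    have heq : (x * (1 - t) - x * t * -1) / (1 - t) ^ 2 = f' t := by
      rw [hf']; field_simp; ring
    rw [heq] at this
    exact this.hasDerivWithinAt
  have hinj : Set.InjOn f (Set.Ioo 0 1) := by
    intro a ⟨ha0, ha1⟩ b ⟨hb0, hb1⟩ hab
    have h1a : (1:ℝ) - a ≠ 0 := by intro h; linarith [h]
    have h1b : (1:ℝ) - b ≠ 0 := by intro h; linarith [h]
    rw [hf] at hab
    field_simp at hab
    have h2 : x * (a - b) = 0 := by nlinarith [hab]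
    rcases mul_eq_zero.mp h2 with h | h
    · exact absurd h hx.ne'
    · linarith
  have hkey : ∀ t ∈ Set.Ioo (0:ℝ) 1,
      |f' t| • ((f t) ^ (u - 1) * (x / (x + f t)))
        = x ^ u * (t ^ (u - 1) * (1 - t) ^ (-u)) := by
    intro t ⟨ht0, ht1⟩
    have h1t : (0:ℝ) < 1 - t := by linarith
    have e1 : x + f t = x / (1 - t) := by rw [hf]; field_simp; ring
    have e2 : x / (x + f t) = 1 - t := by
      rw [e1]
      field_simp
    have e3 : (f t) ^ (u - 1) = x ^ (u - 1) * t ^ (u - 1) * (1 - t) ^ (1 - u) := by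
      rw [hf]
      show (x * t / (1 - t)) ^ (u - 1) = _
      rw [Real.div_rpow (by positivity) h1t.le, Real.mul_rpow hx.le ht0.le,
        div_eq_mul_inv, ← Real.rpow_neg h1t.le, neg_sub]
    have e4 : |f' t| = x / (1 - t) ^ 2 := abs_of_pos (by rw [hf']; positivity)
    rw [smul_eq_mul, e2, e3, e4]
    have e5 : (1 - t) ^ (1 - u) = (1 - t) ^ (-u) * (1 - t) := by
      rw [show (1 - u) = -u + 1 by ring, Real.rpow_add h1t, Real.rpow_one]
    have e6 : x * x ^ (u - 1) = x ^ u := by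
      have h := Real.rpow_add hx 1 (u - 1)
      rw [Real.rpow_one] at h
      rw [← h]
      norm_num
    rw [e5]
    field_simp
    rw [← e6]
  have hint : IntegrableOn (fun t : ℝ => |f' t| • ((f t) ^ (u - 1) * (x / (x + f t))))
      (Set.Ioo 0 1) := by
    refine (integrable_congr ?_).mpr (((beta_real hu hu1).1).const_mul (x ^ u))
    filter_upwards [ae_restrict_mem measurableSet_Ioo] with t ht
    exact hkey t ht
  constructor
  · rw [← himg]
    exact (integrableOn_image_iff_integrableOn_abs_deriv_smul measurableSet_Ioo hderiv hinj
      _).mpr hint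
  · rw [← himg, integral_image_eq_integral_abs_deriv_smul measurableSet_Ioo hderiv hinj]
    rw [setIntegral_congr_fun measurableSet_Ioo hkey, integral_const_mul, (beta_real hu hu1).2]

noncomputable def Dd (s : ℝ) : ℝ := (s + 1) / (s * (π ^ 2 + Real.log s ^ 2))

lemma Dd_pos {s : ℝ} (hs : 0 < s) : 0 < Dd s := by
  have h2 : (0:ℝ) < π ^ 2 + Real.log s ^ 2 := by positivity
  exact div_pos (by linarith) (mul_pos hs h2)

lemma kern_meas (x : ℝ) : Measurable fun p : ℝ × ℝ =>
    ENNReal.ofReal (Real.sin (π * p.2) / π *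
      (Real.exp ((p.2 - 1) * Real.log p.1) * (x / (x + p.1)))) := by
  apply ENNReal.measurable_ofReal.comp
  exact ((measurable_snd.const_mul π).sin.div_const π).mul
    ((((measurable_snd.sub measurable_const).mul
      (Real.measurable_log.comp measurable_fst)).exp).mul
      (measurable_const.div (measurable_const.add measurable_fst)))

lemma inner_u {s x : ℝ} (hs : 0 < s) (hx : 0 < x) :
    ∫⁻ u in Set.Ioo (0:ℝ) 1,
        ENNReal.ofReal (Real.sin (π * u) / π * (s ^ (u - 1) * (x / (x + s))))
      = ENNReal.ofReal (Dd s * (x / (x + s))) := by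
  have hfeq : ∀ u : ℝ, Real.sin (π * u) / π * (s ^ (u - 1) * (x / (x + s)))
      = Real.sin (π * u) * Real.exp (Real.log s * u) * (x / (x + s) / (π * s)) := by
    intro u
    rw [Real.rpow_def_of_pos hs, mul_sub, mul_one, Real.exp_sub, Real.exp_log hs]
    field_simp
  have hcont : Continuous fun u : ℝ =>
      Real.sin (π * u) * Real.exp (Real.log s * u) * (x / (x + s) / (π * s)) := by
    continuity
  have hcont2 : Continuous fun u : ℝ =>
      Real.sin (π * u) / π * (s ^ (u - 1) * (x / (x + s))) := by
    simp only [hfeq]; exact hcont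
  have hInt : IntegrableOn (fun u : ℝ =>
      Real.sin (π * u) / π * (s ^ (u - 1) * (x / (x + s)))) (Set.Ioo 0 1) :=
    (hcont2.integrableOn_Icc (a := 0) (b := 1)).mono_set Set.Ioo_subset_Icc_self
  have hnn : 0 ≤ᵐ[volume.restrict (Set.Ioo (0:ℝ) 1)] fun u : ℝ =>
      Real.sin (π * u) / π * (s ^ (u - 1) * (x / (x + s))) := by
    filter_upwards [ae_restrict_mem measurableSet_Ioo] with u hu
    have hsin : 0 ≤ Real.sin (π * u) := by
      apply Real.sin_nonneg_of_nonneg_of_le_pi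
      · exact mul_nonneg Real.pi_pos.le hu.1.le
      · nlinarith [hu.2, Real.pi_pos]
    have : (0:ℝ) ≤ s ^ (u - 1) := Real.rpow_nonneg hs.le _
    positivity
  rw [← ofReal_integral_eq_lintegral_ofReal hInt hnn]
  congr 1
  have : ∫ u in Set.Ioo (0:ℝ) 1, Real.sin (π * u) / π * (s ^ (u - 1) * (x / (x + s)))
      = ∫ u in (0:ℝ)..1, Real.sin (π * u) * Real.exp (Real.log s * u) * (x / (x + s) / (π * s)) := by
    rw [← MeasureTheory.integral_Ioc_eq_integral_Ioo, ← intervalIntegral.integral_of_le zero_le_one]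
    exact intervalIntegral.integral_congr fun u _ => hfeq u
  rw [this, intervalIntegral.integral_mul_const, sineexp (Real.log s), Real.exp_log hs, Dd]
  have hpi : (π:ℝ) ≠ 0 := Real.pi_ne_zero
  field_simp
  ring

lemma inner_s {u x : ℝ} (hu : u ∈ Set.Ioo (0:ℝ) 1) (hx : 0 < x) :
    ∫⁻ s in Set.Ioi (0:ℝ),
        ENNReal.ofReal (Real.sin (π * u) / π * (s ^ (u - 1) * (x / (x + s))))
      = ENNReal.ofReal (x ^ u) := by
  obtain ⟨hu0, hu1⟩ := hu
  have hsin : 0 < Real.sin (π * u) := by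
    apply Real.sin_pos_of_pos_of_lt_pi
    · exact mul_pos Real.pi_pos hu0
    · nlinarith [Real.pi_pos]
  have hInt := (mellin_frac hu0 hu1 hx).1
  have hnn : 0 ≤ᵐ[volume.restrict (Set.Ioi (0:ℝ))] fun s : ℝ =>
      Real.sin (π * u) / π * (s ^ (u - 1) * (x / (x + s))) := by
    filter_upwards [ae_restrict_mem measurableSet_Ioi] with s hs
    have h1 : (0:ℝ) ≤ s ^ (u - 1) := Real.rpow_nonneg (le_of_lt hs) _
    have h2 : (0:ℝ) ≤ x / (x + s) := by
      apply div_nonneg hx.le; have : (0:ℝ) < s := hs; linarith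
    have := hsin.le
    positivity
  rw [← ofReal_integral_eq_lintegral_ofReal (hInt.const_mul _) hnn]
  congr 1
  rw [MeasureTheory.integral_const_mul, (mellin_frac hu0 hu1 hx).2]
  field_simp

lemma main_lintegral {x : ℝ} (hx : 0 < x) :
    ∫⁻ s in Set.Ioi (0:ℝ), ENNReal.ofReal (Dd s * (x / (x + s)))
      = ENNReal.ofReal (∫ u in (0:ℝ)..1, x ^ u) := by
  have hbridge : ∀ s : ℝ, 0 < s → ∀ u : ℝ,
      Real.sin (π * u) / π * (Real.exp ((u - 1) * Real.log s) * (x / (x + s)))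
        = Real.sin (π * u) / π * (s ^ (u - 1) * (x / (x + s))) := by
    intro s hs u
    rw [Real.rpow_def_of_pos hs, mul_comm (Real.log s)]
  have step1 : ∫⁻ s in Set.Ioi (0:ℝ), ENNReal.ofReal (Dd s * (x / (x + s)))
      = ∫⁻ s in Set.Ioi (0:ℝ), ∫⁻ u in Set.Ioo (0:ℝ) 1,
          ENNReal.ofReal (Real.sin (π * u) / π *
            (Real.exp ((u - 1) * Real.log s) * (x / (x + s)))) := by
    refine setLIntegral_congr_fun measurableSet_Ioi (fun s hs => ?_)
    have hs' : (0:ℝ) < s := hs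
    rw [← inner_u hs' hx]
    refine (setLIntegral_congr_fun measurableSet_Ioo (fun u _ => ?_)).symm
    rw [hbridge s hs' u]
  have step2 : ∫⁻ s in Set.Ioi (0:ℝ), ∫⁻ u in Set.Ioo (0:ℝ) 1,
          ENNReal.ofReal (Real.sin (π * u) / π *
            (Real.exp ((u - 1) * Real.log s) * (x / (x + s))))
      = ∫⁻ u in Set.Ioo (0:ℝ) 1, ∫⁻ s in Set.Ioi (0:ℝ),
          ENNReal.ofReal (Real.sin (π * u) / π *
            (Real.exp ((u - 1) * Real.log s) * (x / (x + s)))) :=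
    lintegral_lintegral_swap (kern_meas x).aemeasurable
  have step3 : ∫⁻ u in Set.Ioo (0:ℝ) 1, ∫⁻ s in Set.Ioi (0:ℝ),
          ENNReal.ofReal (Real.sin (π * u) / π *
            (Real.exp ((u - 1) * Real.log s) * (x / (x + s))))
      = ∫⁻ u in Set.Ioo (0:ℝ) 1, ENNReal.ofReal (x ^ u) := by
    refine setLIntegral_congr_fun measurableSet_Ioo (fun u hu => ?_)
    rw [← inner_s hu hx]
    refine setLIntegral_congr_fun measurableSet_Ioi (fun s hs => ?_)
    rw [hbridge s hs u]
  have step4 : ∫⁻ u in Set.Ioo (0:ℝ) 1, ENNReal.ofReal (x ^ u)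
      = ENNReal.ofReal (∫ u in (0:ℝ)..1, x ^ u) := by
    have hcont : Continuous fun u : ℝ => x ^ u := by
      have : (fun u : ℝ => x ^ u) = fun u : ℝ => Real.exp (Real.log x * u) :=
        funext fun u => Real.rpow_def_of_pos hx u
      rw [this]; continuity
    have hInt : IntegrableOn (fun u : ℝ => x ^ u) (Set.Ioo 0 1) :=
      (hcont.integrableOn_Icc (a := 0) (b := 1)).mono_set Set.Ioo_subset_Icc_self
    have hnn : 0 ≤ᵐ[volume.restrict (Set.Ioo (0:ℝ) 1)] fun u : ℝ => x ^ u :=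
      ae_of_all _ fun u => Real.rpow_nonneg hx.le u
    rw [← ofReal_integral_eq_lintegral_ofReal hInt hnn,
      ← MeasureTheory.integral_Ioc_eq_integral_Ioo,
      ← intervalIntegral.integral_of_le zero_le_one]
  rw [step1, step2, step3, step4]

lemma Dd_meas : Measurable Dd := by
  unfold Dd
  exact (measurable_id'.add_const 1).div
    (measurable_id'.mul (measurable_const.add (Real.measurable_log.pow_const 2)))

lemma main_real {x : ℝ} (hx : 0 < x) :
    IntegrableOn (fun s : ℝ => Dd s * (x / (x + s))) (Set.Ioi 0) ∧
    ∫ s in Set.Ioi (0:ℝ), Dd s * (x / (x + s))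
      = if x = 1 then 1 else (x - 1) / Real.log x := by
  have hnn : 0 ≤ᵐ[volume.restrict (Set.Ioi (0:ℝ))] fun s : ℝ => Dd s * (x / (x + s)) := by
    filter_upwards [ae_restrict_mem measurableSet_Ioi] with s hs
    have hs' : (0:ℝ) < s := hs
    exact mul_nonneg (Dd_pos hs').le (div_nonneg hx.le (by linarith))
  have hmeas : Measurable fun s : ℝ => Dd s * (x / (x + s)) :=
    Dd_meas.mul (measurable_const.div (measurable_const.add measurable_id'))
  have hH : 0 ≤ ∫ u in (0:ℝ)..1, x ^ u :=
    intervalIntegral.integral_nonneg zero_le_one fun u _ => Real.rpow_nonneg hx.le u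
  have hIntegrable : IntegrableOn (fun s : ℝ => Dd s * (x / (x + s))) (Set.Ioi 0) := by
    refine ⟨hmeas.aestronglyMeasurable, ?_⟩
    rw [hasFiniteIntegral_iff_ofReal hnn, main_lintegral hx]
    exact ENNReal.ofReal_lt_top
  refine ⟨hIntegrable, ?_⟩
  rw [integral_eq_lintegral_of_nonneg_ae hnn hmeas.aestronglyMeasurable,
    main_lintegral hx, ENNReal.toReal_ofReal hH, rpow_integral x hx]

def IsCompleteBernstein (f : ℝ → ℝ) : Prop :=
  ∃ (a b : ℝ) (μ : Measure ℝ), 0 ≤ a ∧ 0 ≤ b ∧ μ (Set.Iic 0) = 0 ∧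
    (∫⁻ s, ENNReal.ofReal (1 / (1 + s)) ∂μ) < ⊤ ∧
    ∀ x : ℝ, 0 < x → f x = a + b * x + ∫ s, x / (x + s) ∂μ

/-- `(λ−1)/log(λ)` has the Stieltjes representation
`∫_{0}^{∞} ((s+1)/(s(π²+log(s)²))) (λ/(λ+s)) ds` for `λ > 0`, `λ ≠ 1`; moreover the map
`λ ↦ (λ−1)/log(λ)` (extended by the value `1` at `λ = 1`) is a complete Bernstein function. -/
theorem sub_one_div_log_stieltjes :
    (∀ x : ℝ, 0 < x → x ≠ 1 →
      (x - 1) / Real.log x =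
        ∫ s in Set.Ioi (0 : ℝ),
          ((s + 1) / (s * (π ^ 2 + (Real.log s) ^ 2))) * (x / (x + s))) ∧
    IsCompleteBernstein (fun x => if x = 1 then 1 else (x - 1) / Real.log x) := by
  constructor
  · intro x hx hx1
    have h := (main_real hx).2
    rw [if_neg hx1] at h
    exact h.symm
  · refine ⟨0, 0, (volume.restrict (Set.Ioi (0:ℝ))).withDensity
      (fun s => ((Dd s).toNNReal : ℝ≥0∞)), le_refl 0, le_refl 0, ?_, ?_, ?_⟩
    · rw [withDensity_apply _ measurableSet_Iic,
        Measure.restrict_restrict measurableSet_Iic]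
      simp [Set.Iic_inter_Ioi, Set.Ioc_self]
    · have hf : Measurable fun s : ℝ => ((Dd s).toNNReal : ℝ≥0∞) :=
        measurable_coe_nnreal_ennreal.comp Dd_meas.real_toNNReal
      have hg : Measurable fun s : ℝ => ENNReal.ofReal (1 / (1 + s)) :=
        ENNReal.measurable_ofReal.comp
          (measurable_const.div (measurable_const.add measurable_id'))
      rw [lintegral_withDensity_eq_lintegral_mul _ hf hg]
      have hcongr : ∫⁻ s in Set.Ioi (0:ℝ),
          ((fun s => ((Dd s).toNNReal : ℝ≥0∞)) * fun s => ENNReal.ofReal (1 / (1 + s))) s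
          = ∫⁻ s in Set.Ioi (0:ℝ), ENNReal.ofReal (Dd s * (1 / (1 + s))) := by
        refine setLIntegral_congr_fun measurableSet_Ioi (fun s hs => ?_)
        have hs' : (0:ℝ) < s := hs
        simp only [Pi.mul_apply]
        rw [ENNReal.ofReal_mul (Dd_pos hs').le]
        rfl
      rw [hcongr]
      have := main_lintegral (x := 1) one_pos
      simp only [one_div] at this ⊢
      rw [this]
      exact ENNReal.ofReal_lt_top
    · intro x hx
      rw [integral_withDensity_eq_integral_smul Dd_meas.real_toNNReal
        (fun s => x / (x + s))]
      have hcongr : ∫ s in Set.Ioi (0:ℝ), (Dd s).toNNReal • (x / (x + s))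
          = ∫ s in Set.Ioi (0:ℝ), Dd s * (x / (x + s)) := by
        refine setIntegral_congr_fun measurableSet_Ioi fun s hs => ?_
        have hs' : (0:ℝ) < s := hs
        rw [NNReal.smul_def, smul_eq_mul, Real.coe_toNNReal _ (Dd_pos hs').le]
      rw [hcongr, (main_real hx).2]
      ring
end

section
/- For every λ > 0 with λ ≠ 1, one has (λ·log(λ) − λ + 1)/log(λ)² = ∫_{0}^{∞} ((π² − 2(1+1/s)log(s) + log(s)²)/(π²+log(s)²)²) · (λ/(λ+s)) ds. -/
set_option maxHeartbeats 1000000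

open MeasureTheory Real

section auxlemmas

lemma aux_outer (x : ℝ) (hx : 0 < x) (hx1 : x ≠ 1) :
    ∫ u in (0:ℝ)..1, (1-u) * x ^ (1-u) = (x * Real.log x - x + 1) / (Real.log x)^2 := by
  have hc : Real.log x ≠ 0 := Real.log_ne_zero_of_pos_of_ne_one hx hx1
  set c := Real.log x with hc'
  have key : ∀ u ∈ Set.uIcc (0:ℝ) 1, HasDerivAt (fun u : ℝ => Real.exp ((1-u)*c) * (1/c^2 - (1-u)/c))
      ((1-u) * Real.exp ((1-u)*c)) u := by
    intro u _
    have h1 : HasDerivAt (fun u : ℝ => (1-u)*c) (-c) u := by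
      simpa using ((hasDerivAt_id u).const_sub 1).mul_const c
    have h2 := h1.exp
    have h3 : HasDerivAt (fun u : ℝ => 1/c^2 - (1-u)/c) (1/c) u := by
      have := (((hasDerivAt_id u).const_sub 1).div_const c).const_sub (1/c^2)
      refine this.congr_deriv ?_
      field_simp
    have := h2.mul h3
    refine this.congr_deriv ?_
    field_simp
    ring
  have hint : IntervalIntegrable (fun u : ℝ => (1-u) * Real.exp ((1-u)*c)) volume 0 1 := by
    apply Continuous.intervalIntegrable; continuity
  have hFTC := intervalIntegral.integral_eq_sub_of_hasDerivAt key hint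
  have heq : (fun u : ℝ => (1-u) * x ^ (1-u)) = fun u => (1-u) * Real.exp ((1-u)*c) := by
    funext u
    rw [Real.rpow_def_of_pos hx]
    ring_nf
    rfl
  rw [heq, hFTC]
  have hx' : Real.exp c = x := Real.exp_log hx
  norm_num
  rw [hx']
  field_simp
  ring

lemma aux_inner (s : ℝ) (hs : 0 < s) :
    ∫ u in (0:ℝ)..1, (1-u) * Real.sin (π*u) * s ^ (-u)
      = π * ((π^2 - 2*(1+1/s)*Real.log s + (Real.log s)^2) / (π^2+(Real.log s)^2)^2) := by
  set L := Real.log s with hL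
  set a : ℂ := ⟨-L, π⟩ with ha
  have ha0 : a ≠ 0 := by
    intro h
    have := congrArg Complex.im h
    simp [ha] at this
  have key : ∀ u ∈ Set.uIcc (0:ℝ) 1, HasDerivAt (fun u : ℝ => Complex.exp (a*u) * ((1-u)/a + 1/a^2))
      ((1-(u:ℂ)) * Complex.exp (a*u)) u := by
    intro u _
    have h1 : HasDerivAt (fun u : ℝ => Complex.exp (a*u)) (a * Complex.exp (a*u)) u := by
      have : HasDerivAt (fun u : ℝ => a*(u:ℂ)) a u := by
        simpa using (Complex.ofRealCLM.hasDerivAt (x := u)).const_mul a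
      simpa [mul_comm] using this.cexp
    have h2 : HasDerivAt (fun u : ℝ => ((1-(u:ℂ))/a + 1/a^2)) (-(1/a)) u := by
      have h3 : HasDerivAt (fun u : ℝ => (1-(u:ℂ))) (-1) u := by
        simpa using (Complex.ofRealCLM.hasDerivAt (x := u)).const_sub 1
      have := (h3.div_const a).add_const (1/a^2)
      refine this.congr_deriv ?_
      field_simp
    have := h1.mul h2
    refine this.congr_deriv ?_
    field_simp
    ring
  have hint : IntervalIntegrable (fun u : ℝ => (1-(u:ℂ)) * Complex.exp (a*u)) volume 0 1 := by
    apply Continuous.intervalIntegrable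
    fun_prop
  have hFTC := intervalIntegral.integral_eq_sub_of_hasDerivAt key hint
  have him : ∀ u : ℝ, (1-u) * Real.sin (π*u) * s ^ (-u) = ((1-(u:ℂ)) * Complex.exp (a*u)).im := by
    intro u
    have h1 : (a*u : ℂ).re = -L*u := by simp [ha]
    have h2 : (a*u : ℂ).im = π*u := by simp [ha]
    rw [Complex.mul_im, Complex.exp_re, Complex.exp_im, h1, h2]
    have h3 : Real.exp (-(u*L)) = s ^ (-u) := by
      rw [Real.rpow_def_of_pos hs]; ring_nf; rfl
    simp only [Complex.sub_re, Complex.sub_im, Complex.one_re, Complex.one_im,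
      Complex.ofReal_re, Complex.ofReal_im]
    rw [show -L*u = -(u*L) by ring, h3]
    ring
  have hexpa : Complex.exp a = ((-(1/s) : ℝ) : ℂ) := by
    have h4 : a = ((-L : ℝ) : ℂ) + π * Complex.I := by
      apply Complex.ext <;> simp [ha]
    rw [h4, Complex.exp_add, Complex.exp_pi_mul_I]
    rw [← Complex.ofReal_exp]
    have : Real.exp (-L) = 1/s := by
      rw [Real.exp_neg, Real.exp_log hs, one_div]
    rw [this]
    push_cast
    ring
  calc ∫ u in (0:ℝ)..1, (1-u) * Real.sin (π*u) * s ^ (-u)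
      = ∫ u in (0:ℝ)..1, ((1-(u:ℂ)) * Complex.exp (a*u)).im := by
        simp_rw [him]
    _ = (∫ u in (0:ℝ)..1, (1-(u:ℂ)) * Complex.exp (a*u)).im := by
        rw [intervalIntegral.integral_of_le (by norm_num),
          intervalIntegral.integral_of_le (by norm_num)]
        symm
        simpa [RCLike.im_eq_complex_im] using (integral_im hint.1).symm
    _ = π * ((π^2 - 2*(1+1/s)*L + L^2) / (π^2+L^2)^2) := by
        rw [hFTC]
        push_cast
        rw [mul_one, mul_zero, Complex.exp_zero, hexpa]
        have hval : ∀ w : ℂ, w * ((1-1)/a + 1/a^2) - 1 * ((1-0)/a + 1/a^2)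
            = (w - 1 - a)/a^2 := by
          intro w
          have h2 : a^2 ≠ 0 := pow_ne_zero 2 ha0
          field_simp
          ring_nf
        rw [hval]
        have hsqre : (a^2).re = L^2 - π^2 := by
          simp [pow_two, Complex.mul_re, ha]; try ring
        have hsqim : (a^2).im = -(2*L*π) := by
          simp [pow_two, Complex.mul_im, ha]; try ring
        have hnumre : ((((-(1/s):ℝ)) : ℂ) - 1 - a).re = -(1/s) - 1 + L := by simp [ha]
        have hnumim : ((((-(1/s):ℝ)) : ℂ) - 1 - a).im = -π := by simp [ha]
        have hns : Complex.normSq (a^2) = (π^2 + L^2)^2 := by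
          rw [Complex.normSq_apply, hsqre, hsqim]; ring
        rw [Complex.div_im, hsqre, hsqim, hnumre, hnumim, hns]
        have hpos : (π^2 + L^2)^2 ≠ 0 := by positivity
        field_simp
        ring

-- real Beta value
lemma beta_val (u : ℝ) (hu : u ∈ Set.Ioo (0:ℝ) 1) :
    ∫ t in (0:ℝ)..1, t ^ (-u) * (1-t) ^ (u-1) = π / Real.sin (π*u) := by
  obtain ⟨hu0, hu1⟩ := hu
  have h1u : 0 < 1 - u := by linarith
  have hbeta := Complex.Gamma_mul_Gamma_eq_betaIntegral (s := ((1-u : ℝ) : ℂ)) (t := ((u:ℝ) : ℂ))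
    (by simpa using h1u) (by simpa using hu0)
  have hsum : ((1-u:ℝ) : ℂ) + (u:ℝ) = 1 := by push_cast; ring
  rw [hsum, Complex.Gamma_one, one_mul] at hbeta
  have hcast : Complex.betaIntegral ((1-u:ℝ):ℂ) ((u:ℝ):ℂ)
      = ((∫ t in (0:ℝ)..1, t ^ (-u) * (1-t) ^ (u-1) : ℝ) : ℂ) := by
    rw [Complex.betaIntegral, ← intervalIntegral.integral_ofReal]
    apply intervalIntegral.integral_congr
    intro t ht
    rw [Set.uIcc_of_le (by norm_num : (0:ℝ) ≤ 1)] at ht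
    obtain ⟨ht0, ht1⟩ := ht
    push_cast
    rw [Complex.ofReal_cpow ht0, Complex.ofReal_cpow (by linarith : (0:ℝ) ≤ 1 - t)]
    push_cast
    ring_nf
  rw [hcast] at hbeta
  have hgam : Complex.Gamma ((1-u:ℝ):ℂ) * Complex.Gamma ((u:ℝ):ℂ)
      = ((π / Real.sin (π*u) : ℝ) : ℂ) := by
    rw [Complex.Gamma_ofReal, Complex.Gamma_ofReal, ← Complex.ofReal_mul]
    congr 1
    rw [mul_comm]
    have := Real.Gamma_mul_Gamma_one_sub u
    rw [this]
  rw [hgam] at hbeta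
  exact_mod_cast hbeta.symm

lemma aux_beta (x u : ℝ) (hx : 0 < x) (hu : u ∈ Set.Ioo (0:ℝ) 1) :
    IntegrableOn (fun s => s ^ (-u) * (x/(x+s))) (Set.Ioi 0) ∧
    ∫ s in Set.Ioi (0:ℝ), s ^ (-u) * (x/(x+s)) = π * x ^ (1-u) / Real.sin (π*u) := by
  obtain ⟨hu0, hu1⟩ := hu
  set f : ℝ → ℝ := fun t => x*t/(1-t) with hf
  set f' : ℝ → ℝ := fun t => x/(1-t)^2 with hf'
  set g : ℝ → ℝ := fun s => s ^ (-u) * (x/(x+s)) with hg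
  have hder : ∀ t ∈ Set.Ioo (0:ℝ) 1, HasDerivWithinAt f (f' t) (Set.Ioo 0 1) t := by
    intro t ht
    have h1t : 1 - t ≠ 0 := by have := ht.2; intro h; linarith [ht.2]
    have hnum : HasDerivAt (fun t : ℝ => x*t) x t := by
      simpa using (hasDerivAt_id t).const_mul x
    have hden : HasDerivAt (fun t : ℝ => 1-t) (-1) t := by
      simpa using (hasDerivAt_id t).const_sub 1
    have := hnum.div hden h1t
    refine HasDerivAt.hasDerivWithinAt ?_
    refine this.congr_deriv ?_
    simp only [hf']
    ring
  have hinj : Set.InjOn f (Set.Ioo 0 1) := by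
    intro a ha b hb h
    have h1a : 1 - a ≠ 0 := by intro h'; linarith [ha.2]
    have h1b : 1 - b ≠ 0 := by intro h'; linarith [hb.2]
    simp only [hf] at h
    field_simp at h
    have h' : b*(1-a) = a*(1-b) := mul_left_cancel₀ hx.ne' (by linear_combination (-x) * h)
    nlinarith [h']
  have himg : f '' Set.Ioo 0 1 = Set.Ioi 0 := by
    ext y
    constructor
    · rintro ⟨t, ⟨ht0, ht1⟩, rfl⟩
      exact div_pos (mul_pos hx ht0) (by linarith)
    · intro hy
      rw [Set.mem_Ioi] at hy
      refine ⟨y/(x+y), ⟨div_pos hy (by linarith), (div_lt_one (by linarith)).2 (by linarith)⟩, ?_⟩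
      simp only [hf]
      have hxy : x + y ≠ 0 := by positivity
      field_simp
      rw [add_sub_cancel_right]; exact div_self hx.ne'
  have heq : Set.EqOn (fun t => x ^ (1-u) * (t ^ (-u) * (1-t) ^ (u-1)))
      (fun t => |f' t| • g (f t)) (Set.Ioo 0 1) := by
    intro t ht
    obtain ⟨ht0, ht1⟩ := ht
    have h1t : 0 < 1 - t := by linarith
    have hft : 0 < f t := div_pos (mul_pos hx ht0) h1t
    have habs : |f' t| = x/(1-t)^2 := abs_of_pos (by positivity)
    have hxft : x/(x + f t) = 1 - t := by
      simp only [hf]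
      rw [show x + x*t/(1-t) = x/(1-t) by field_simp; try ring]
      rw [div_div_eq_mul_div, mul_comm, mul_div_assoc, div_self hx.ne', mul_one]
    have hpow : (f t) ^ (-u) = x ^ (-u) * t ^ (-u) * (1-t) ^ u := by
      simp only [hf]
      rw [show x*t/(1-t) = x*t*(1-t)⁻¹ by ring]
      rw [Real.mul_rpow (by positivity) (by positivity),
        Real.mul_rpow hx.le ht0.le, Real.inv_rpow h1t.le,
        Real.rpow_neg h1t.le, inv_inv]
    simp only [smul_eq_mul, hg]
    rw [habs, hxft, hpow]
    rw [show x ^ (1-u) = x ^ (1:ℝ) * x ^ (-u) by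
      rw [← Real.rpow_add hx, show (1:ℝ)+-u = 1-u by ring],
      show (1-t) ^ (u-1) = (1-t) ^ u / (1-t) ^ (1:ℝ) by
      rw [← Real.rpow_sub h1t],
      Real.rpow_one, Real.rpow_one]
    field_simp
  have hbetaint : IntegrableOn (fun t => x ^ (1-u) * (t ^ (-u) * (1-t) ^ (u-1)))
      (Set.Ioo (0:ℝ) 1) := by
    have hc := (Complex.betaIntegral_convergent (u := ((1-u:ℝ):ℂ)) (v := ((u:ℝ):ℂ))
      (by simpa using (by linarith : (0:ℝ) < 1-u)) (by simpa using hu0)).1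
    have hnorm : IntegrableOn
        (fun t : ℝ => ‖(t:ℂ) ^ (((1-u:ℝ):ℂ) - 1) * (1 - (t:ℂ)) ^ (((u:ℝ):ℂ)-1)‖)
        (Set.Ioc 0 1) := hc.norm
    have : IntegrableOn (fun t : ℝ => t ^ (-u) * (1-t) ^ (u-1)) (Set.Ioo (0:ℝ) 1) := by
      refine ((hnorm.mono_set Set.Ioo_subset_Ioc_self).congr_fun ?_ measurableSet_Ioo)
      intro t ⟨ht0, ht1⟩
      have h1t : 0 < 1 - t := by linarith
      simp only [norm_mul]
      rw [show ((1-u:ℝ):ℂ) - 1 = ((-u : ℝ):ℂ) by push_cast; ring]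
      rw [show ((1:ℂ) - (t:ℂ)) = (((1-t:ℝ)):ℂ) by push_cast; ring]
      rw [show ((u:ℝ):ℂ) - 1 = (((u-1:ℝ)):ℂ) by push_cast; ring]
      rw [Complex.norm_cpow_eq_rpow_re_of_pos ht0, Complex.norm_cpow_eq_rpow_re_of_pos h1t]
      simp
    exact this.const_mul _
  have hiff := integrableOn_image_iff_integrableOn_abs_deriv_smul measurableSet_Ioo hder hinj g
  rw [himg] at hiff
  have hint : IntegrableOn g (Set.Ioi 0) := by
    rw [hiff]
    exact (hbetaint.congr_fun heq measurableSet_Ioo)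
  have hval := integral_image_eq_integral_abs_deriv_smul measurableSet_Ioo hder hinj g
  rw [himg] at hval
  refine ⟨hint, ?_⟩
  rw [hval, ← setIntegral_congr_fun measurableSet_Ioo heq]
  rw [MeasureTheory.integral_const_mul]
  have : ∫ t in Set.Ioo (0:ℝ) 1, t ^ (-u) * (1-t) ^ (u-1) = π / Real.sin (π*u) := by
    rw [← beta_val u ⟨hu0, hu1⟩, intervalIntegral.integral_of_le (by norm_num : (0:ℝ) ≤ 1),
      MeasureTheory.integral_Ioc_eq_integral_Ioo]
  rw [this]
  ring

end auxlemmas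

/-- Stieltjes representation of `(λ log λ − λ + 1)/log(λ)²`:
for `λ > 0`, `λ ≠ 1`, it equals
`∫_{0}^{∞} ((π² − 2(1+1/s)log s + log(s)²)/(π²+log(s)²)²) (λ/(λ+s)) ds`. -/
theorem mul_log_sub_div_log_sq_stieltjes (x : ℝ) (hx : 0 < x) (hx1 : x ≠ 1) :
    (x * Real.log x - x + 1) / (Real.log x) ^ 2 =
      ∫ s in Set.Ioi (0 : ℝ),
        ((π ^ 2 - 2 * (1 + 1 / s) * Real.log s + (Real.log s) ^ 2) /
            (π ^ 2 + (Real.log s) ^ 2) ^ 2) * (x / (x + s)) := by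
  set μ := volume.restrict (Set.Ioi (0:ℝ)) with hμ
  set ν := volume.restrict (Set.Ioo (0:ℝ) 1) with hν
  set φ : ℝ → ℝ → ℝ := fun s u => ((1-u) * Real.sin (π*u)) * (s ^ (-u) * (x/(x+s))) with hφ
  -- measurability of uncurried φ
  have hmeas : Measurable (Function.uncurry φ) := by
    show Measurable (fun p : ℝ × ℝ => (1 - p.2) * Real.sin (π * p.2) * (p.1 ^ (-p.2) * (x / (x + p.1))))
    measurability
  -- inner u-integral over Ioo for fixed s
  have hinner : ∀ s : ℝ, 0 < s → ∫ u, φ s u ∂ν =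
      π * ((π^2 - 2*(1+1/s)*Real.log s + (Real.log s)^2) / (π^2+(Real.log s)^2)^2) * (x/(x+s)) := by
    intro s hs
    have : ∫ u, φ s u ∂ν = (∫ u in Set.Ioo (0:ℝ) 1, (1-u) * Real.sin (π*u) * s ^ (-u)) * (x/(x+s)) := by
      rw [hν, ← integral_mul_const]
      congr 1 with u
      ring
    rw [this, ← MeasureTheory.integral_Ioc_eq_integral_Ioo,
      ← intervalIntegral.integral_of_le (zero_le_one), aux_inner s hs]
  -- s-integral for fixed u in Ioo 0 1
  have houter : ∀ u : ℝ, u ∈ Set.Ioo (0:ℝ) 1 → ∫ s, φ s u ∂μ = π * ((1-u) * x ^ (1-u)) := by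
    intro u hu
    have hsin : 0 < Real.sin (π*u) := by
      apply Real.sin_pos_of_pos_of_lt_pi (mul_pos Real.pi_pos hu.1)
      calc π*u < π*1 := by
            exact mul_lt_mul_of_pos_left hu.2 Real.pi_pos
        _ = π := mul_one π
    have : ∫ s, φ s u ∂μ = ((1-u) * Real.sin (π*u)) * ∫ s in Set.Ioi (0:ℝ), s ^ (-u) * (x/(x+s)) := by
      rw [hμ, ← integral_const_mul]
    rw [this, (aux_beta x u hx hu).2]
    rw [mul_div_assoc', div_eq_iff hsin.ne']
    ring
  -- integrability on the product
  have hintprod : Integrable (Function.uncurry φ) (μ.prod ν) := by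
    rw [MeasureTheory.integrable_prod_iff' (hmeas.aestronglyMeasurable)]
    constructor
    · refine (ae_restrict_mem measurableSet_Ioo).mono fun u hu => ?_
      have h3 := (aux_beta x u hx hu).1.const_mul ((1-u) * Real.sin (π*u))
      exact h3
    · have hnn : (fun u => ∫ s, ‖φ s u‖ ∂μ) =ᶠ[ae ν] (fun u => π * ((1-u) * x ^ (1-u))) := by
        refine (ae_restrict_mem measurableSet_Ioo).mono fun u hu => ?_
        show (∫ s, ‖φ s u‖ ∂μ) = π * ((1-u) * x ^ (1-u))
        have h1 : ∫ s, ‖φ s u‖ ∂μ = ∫ s, φ s u ∂μ := by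
          rw [hμ]
          apply setIntegral_congr_fun measurableSet_Ioi
          intro s hs
          rw [Set.mem_Ioi] at hs
          apply Real.norm_of_nonneg
          have h2 : 0 ≤ Real.sin (π*u) := by
            apply Real.sin_nonneg_of_nonneg_of_le_pi (le_of_lt (mul_pos Real.pi_pos hu.1))
            nlinarith [Real.pi_pos, hu.2]
          have : (0:ℝ) < s ^ (-u) := Real.rpow_pos_of_pos hs _
          have : (0:ℝ) < x/(x+s) := by positivity
          have : (0:ℝ) ≤ 1-u := by linarith [hu.2]
          positivity
        rw [h1, houter u hu]
      have hc : Continuous fun u : ℝ => π * ((1-u) * x ^ (1-u)) := by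
        apply continuous_const.mul
        apply Continuous.mul (by continuity)
        have : Continuous fun u : ℝ => Real.exp ((1-u) * Real.log x) := by continuity
        refine this.congr fun u => ?_
        rw [Real.rpow_def_of_pos hx, mul_comm]
      have hg : Integrable (fun u => π * ((1-u) * x ^ (1-u))) ν := by
        rw [hν]
        exact (hc.integrableOn_Icc.mono_set Set.Ioo_subset_Icc_self)
      exact hg.congr hnn.symm
  -- now the chain
  have hswap := MeasureTheory.integral_integral_swap hintprod
  have hL : ∫ s, ∫ u, φ s u ∂ν ∂μ =
      π * ∫ s in Set.Ioi (0:ℝ),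
        ((π ^ 2 - 2 * (1 + 1 / s) * Real.log s + (Real.log s) ^ 2) /
            (π ^ 2 + (Real.log s) ^ 2) ^ 2) * (x / (x + s)) := by
    rw [hμ, ← integral_const_mul]
    apply setIntegral_congr_fun measurableSet_Ioi
    intro s hs
    rw [Set.mem_Ioi] at hs
    dsimp only
    rw [hinner s hs]
    ring
  have hR : ∫ u, ∫ s, φ s u ∂μ ∂ν = π * ((x * Real.log x - x + 1) / (Real.log x) ^ 2) := by
    have : ∫ u, ∫ s, φ s u ∂μ ∂ν = ∫ u in Set.Ioo (0:ℝ) 1, π * ((1-u) * x ^ (1-u)) := by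
      rw [hν]
      refine setIntegral_congr_fun measurableSet_Ioo fun u hu => ?_
      exact houter u hu
    rw [this, MeasureTheory.integral_const_mul, ← MeasureTheory.integral_Ioc_eq_integral_Ioo,
      ← intervalIntegral.integral_of_le (zero_le_one), aux_outer x hx hx1]
  rw [hL, hR] at hswap
  have hπ : (π:ℝ) ≠ 0 := Real.pi_ne_zero
  exact (mul_left_cancel₀ hπ hswap).symm
end
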